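/- With the twisted GKLO operators as in the context: for every i ∈ I and 1 ≤ k ≤ m_i, the composition κ'_{i,k} ∘ κ_{i,k} is the multiplication operator M(g), where g = R_i(ξ_{i,k}) · ∏_{j ∈ {i−1,i+1}} ∏_{l=1}^{m_j}(ξ_{i,k}² − (γ_{j,l} + ½ℏ)²) / [4(ξ_{i,k} − ½ℏ)(ξ_{i,k} + ½ℏ) · ∏_{1≤l≤m_i, l≠k}(ξ_{i,k}² − γ_{i,l}²)(ξ_{i,k}² − ξ_{i,l}²)]. -/

import Mathlib

/- Twisted GKLO representation setup (type AI).
   Indices: `i ∈ I = {1,…,n−1}`, `1 ≤ k ≤ m i`, with conventions `m 0 = m n = 0`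
   (and `lam 0 = lam n = 0`), so that the indeterminates are exactly
   `ℏ`, `γ_{i,k}` (`i ∈ I`, `1 ≤ k ≤ m i`), `r_{i,t}` (`i ∈ I`, `1 ≤ t ≤ lam i`). -/

noncomputable section

/-- The indexing type of the indeterminates: `ℏ`, the `γ_{i,k}` and the `r_{i,t}`. -/
abbrev GVar (n : ℕ) (m lam : ℕ → ℕ) : Type :=
  Unit ⊕ ((Σ i : Fin (n + 1), Fin (m i)) ⊕ (Σ i : Fin (n + 1), Fin (lam i)))

/-- `F`, the fraction field of the polynomial ring over `ℂ` in the indeterminates. -/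
abbrev GF (n : ℕ) (m lam : ℕ → ℕ) : Type :=
  FractionRing (MvPolynomial (GVar n m lam) ℂ)

/-- The indeterminate `ℏ`. -/
def hb (n : ℕ) (m lam : ℕ → ℕ) : GF n m lam :=
  algebraMap (MvPolynomial (GVar n m lam) ℂ) (GF n m lam) (MvPolynomial.X (Sum.inl ()))

/-- The indeterminate `γ_{i,k}` (for `1 ≤ k ≤ m i`, `i ≤ n`; junk value `0` otherwise). -/
def gam (n : ℕ) (m lam : ℕ → ℕ) (i k : ℕ) : GF n m lam :=
  if h : i < n + 1 ∧ k - 1 < m i then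
    algebraMap (MvPolynomial (GVar n m lam) ℂ) (GF n m lam)
      (MvPolynomial.X (Sum.inr (Sum.inl ⟨⟨i, h.1⟩, ⟨k - 1, h.2⟩⟩)))
  else 0

/-- The indeterminate `r_{i,t}` (for `1 ≤ t ≤ lam i`, `i ≤ n`; junk value `0` otherwise). -/
def rv (n : ℕ) (m lam : ℕ → ℕ) (i t : ℕ) : GF n m lam :=
  if h : i < n + 1 ∧ t - 1 < lam i then
    algebraMap (MvPolynomial (GVar n m lam) ℂ) (GF n m lam)
      (MvPolynomial.X (Sum.inr (Sum.inr ⟨⟨i, h.1⟩, ⟨t - 1, h.2⟩⟩)))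
  else 0

/-- `ξ_{i,k} = γ_{i,k} + ℏ`. -/
def xi (n : ℕ) (m lam : ℕ → ℕ) (i k : ℕ) : GF n m lam :=
  gam n m lam i k + hb n m lam

/-- `R_i(x) = ∏_{t=1}^{λ_i} (x² − r_{i,t}²)`. -/
def RR (n : ℕ) (m lam : ℕ → ℕ) (i : ℕ) (x : GF n m lam) : GF n m lam :=
  ∏ t ∈ Finset.Icc 1 (lam i), (x ^ 2 - rv n m lam i t ^ 2)

/-- The coefficient `c_{i,k}` of the twisted GKLO operator `κ_{i,k}`. -/
def cc (n : ℕ) (m lam : ℕ → ℕ) (i k : ℕ) : GF n m lam :=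
  ((∏ l ∈ Finset.Icc 1 (m (i + 1)),
      (gam n m lam i k ^ 2 - (gam n m lam (i + 1) l + hb n m lam / 2) ^ 2)) *
    ∏ l ∈ Finset.Icc 1 (m (i - 1)),
      (gam n m lam i k + gam n m lam (i - 1) l + hb n m lam / 2)) /
  (2 * (gam n m lam i k - hb n m lam / 2) *
    ∏ l ∈ (Finset.Icc 1 (m i)).erase k, (gam n m lam i k ^ 2 - gam n m lam i l ^ 2))

/-- The coefficient `c'_{i,k}` of the twisted GKLO operator `κ'_{i,k}`. -/
def cc' (n : ℕ) (m lam : ℕ → ℕ) (i k : ℕ) : GF n m lam :=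
  (RR n m lam i (xi n m lam i k) *
    ∏ l ∈ Finset.Icc 1 (m (i - 1)),
      (xi n m lam i k - gam n m lam (i - 1) l - hb n m lam / 2)) /
  (2 * (gam n m lam i k + 3 * hb n m lam / 2) *
    ∏ l ∈ (Finset.Icc 1 (m i)).erase k, (xi n m lam i k ^ 2 - xi n m lam i l ^ 2))

/-- `M(f)`, the multiplication operator `x ↦ f·x`, as a `ℂ`-linear endomorphism of `F`. -/
def Mop (n : ℕ) (m lam : ℕ → ℕ) (f : GF n m lam) : Module.End ℂ (GF n m lam) :=
  LinearMap.mulLeft ℂ f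

/-- `κ_{i,k} = M(c_{i,k}) ∘ σ⁻_{i,k}`, where `σ` is the family of automorphisms `σ⁻`. -/
def kap (n : ℕ) (m lam : ℕ → ℕ) (σ : ℕ → ℕ → (GF n m lam ≃ₐ[ℂ] GF n m lam))
    (i k : ℕ) : Module.End ℂ (GF n m lam) :=
  Mop n m lam (cc n m lam i k) * (σ i k).toLinearMap

/-- `κ'_{i,k} = M(c'_{i,k}) ∘ σ⁺_{i,k}`, where `σ` is the family of automorphisms `σ⁺`. -/
def kap' (n : ℕ) (m lam : ℕ → ℕ) (σ : ℕ → ℕ → (GF n m lam ≃ₐ[ℂ] GF n m lam))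
    (i k : ℕ) : Module.End ℂ (GF n m lam) :=
  Mop n m lam (cc' n m lam i k) * (σ i k).toLinearMap

/-- The Cartan matrix of `sl_n`: `a_{ii} = 2`, `a_{ij} = −1` if `|i−j|=1`, else `0`. -/
def cartan (i j : ℕ) : ℤ :=
  if i = j then 2 else if i + 1 = j ∨ j + 1 = i then -1 else 0

/-!
`σ⁺_{i,k}` undoes `σ⁻_{i,k}` (both are determined by their values on the indeterminates), so
`κ'_{i,k} ∘ κ_{i,k}` is multiplication by `c'_{i,k} · σ⁺_{i,k}(c_{i,k})`. Applying `σ⁺_{i,k}` to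
`c_{i,k}` substitutes `ξ_{i,k}` for `γ_{i,k}`, and the product then collapses to `g` through
`(ξ − γ − ½ℏ)(ξ + γ + ½ℏ) = ξ² − (γ + ½ℏ)²` and `γ_{i,k} + (3/2)ℏ = ξ_{i,k} + ½ℏ`.
-/

open Finset

theorem FractionRing.mvPolynomial_algHom_ext {R ι B : Type*} [CommRing R] [IsDomain R]
    [Semiring B] [Algebra R B] {f g : FractionRing (MvPolynomial ι R) →ₐ[R] B}
    (h : ∀ v, f (algebraMap (MvPolynomial ι R) _ (MvPolynomial.X v)) =
      g (algebraMap (MvPolynomial ι R) _ (MvPolynomial.X v))) :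
    f = g :=
  IsLocalization.algHom_ext (nonZeroDivisors _) (MvPolynomial.algHom_ext h)

theorem AlgEquiv.mulLeft_mul_toLinearMap_mul_of_leftInverse {R A : Type*} [CommSemiring R]
    [CommSemiring A] [Algebra R A] {σ τ : A ≃ₐ[R] A} (h : Function.LeftInverse σ τ) (a b : A) :
    LinearMap.mulLeft R a * σ.toLinearMap * (LinearMap.mulLeft R b * τ.toLinearMap) =
      LinearMap.mulLeft R (a * σ b) := by
  ext x
  simp [h x, mul_assoc]

theorem Finset.prod_sq_sub_add_half_sq {ι K : Type*} [Field K] (s : Finset ι) (x h : K)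
    (y : ι → K) :
    ∏ l ∈ s, (x ^ 2 - (y l + h / 2) ^ 2) =
      (∏ l ∈ s, (x - y l - h / 2)) * ∏ l ∈ s, (x + y l + h / 2) := by
  rw [← prod_mul_distrib]
  exact prod_congr rfl fun l _ => by ring

section GKLO

variable {n : ℕ} {m lam : ℕ → ℕ}

theorem algebraMap_X_gam (j : Fin (n + 1)) (l : Fin (m j)) :
    algebraMap (MvPolynomial (GVar n m lam) ℂ) (GF n m lam)
        (MvPolynomial.X (Sum.inr (Sum.inl ⟨j, l⟩))) = gam n m lam j (l + 1) := by
  rw [gam, dif_pos ⟨j.2, by simp⟩]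
  rfl

theorem algebraMap_X_rv (j : Fin (n + 1)) (t : Fin (lam j)) :
    algebraMap (MvPolynomial (GVar n m lam) ℂ) (GF n m lam)
        (MvPolynomial.X (Sum.inr (Sum.inr ⟨j, t⟩))) = rv n m lam j (t + 1) := by
  rw [rv, dif_pos ⟨j.2, by simp⟩]
  rfl

theorem leftInverse_of_shift {φ ψ : GF n m lam ≃ₐ[ℂ] GF n m lam} {i k : ℕ}
    (hm0 : m 0 = 0) (hmn : m n = 0)
    (hφh : φ (hb n m lam) = hb n m lam) (hψh : ψ (hb n m lam) = hb n m lam)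
    (hφr : ∀ j t, φ (rv n m lam j t) = rv n m lam j t)
    (hψr : ∀ j t, ψ (rv n m lam j t) = rv n m lam j t)
    (hφg : ∀ j l, 1 ≤ j → j ≤ n - 1 → 1 ≤ l → l ≤ m j →
      φ (gam n m lam j l) =
        if j = i ∧ l = k then gam n m lam i k + hb n m lam else gam n m lam j l)
    (hψg : ∀ j l, 1 ≤ j → j ≤ n - 1 → 1 ≤ l → l ≤ m j →
      ψ (gam n m lam j l) =
        if j = i ∧ l = k then gam n m lam i k - hb n m lam else gam n m lam j l)
    (hi : 1 ≤ i) (hi' : i ≤ n - 1) (hk : 1 ≤ k) (hk' : k ≤ m i) :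
    Function.LeftInverse φ ψ := by
  suffices h : φ.toAlgHom.comp ψ.toAlgHom = AlgHom.id ℂ _ from fun x => AlgHom.congr_fun h x
  refine FractionRing.mvPolynomial_algHom_ext fun v => ?_
  rcases v with _ | ⟨j, l⟩ | ⟨j, t⟩
  · exact (congrArg φ hψh).trans hφh
  · have hpos : 0 < m j := l.pos
    have hj0 : (j : ℕ) ≠ 0 := fun h => by rw [h, hm0] at hpos; omega
    have hjn : (j : ℕ) ≠ n := fun h => by rw [h, hmn] at hpos; omega
    have hj : (j : ℕ) ≤ n - 1 := by omega
    show φ (ψ _) = _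
    rw [algebraMap_X_gam, hψg _ _ (by omega) hj (by omega) l.2]
    by_cases hc : (j : ℕ) = i ∧ (l : ℕ) + 1 = k
    · rw [if_pos hc, map_sub, hφg i k hi hi' hk hk', if_pos ⟨rfl, rfl⟩, hφh, hc.2, hc.1]
      exact add_sub_cancel_right _ _
    · rw [if_neg hc, hφg _ _ (by omega) hj (by omega) l.2, if_neg hc]
      rfl
  · show φ (ψ _) = _
    rw [algebraMap_X_rv, hψr, hφr]
    rfl

/-- `c_{i,k}` with the value `x` substituted for `γ_{i,k}`. -/
def ccAt (n : ℕ) (m lam : ℕ → ℕ) (i k : ℕ) (x : GF n m lam) : GF n m lam :=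
  ((∏ l ∈ Icc 1 (m (i + 1)), (x ^ 2 - (gam n m lam (i + 1) l + hb n m lam / 2) ^ 2)) *
    ∏ l ∈ Icc 1 (m (i - 1)), (x + gam n m lam (i - 1) l + hb n m lam / 2)) /
  (2 * (x - hb n m lam / 2) * ∏ l ∈ (Icc 1 (m i)).erase k, (x ^ 2 - gam n m lam i l ^ 2))

theorem cc_eq_ccAt (i k : ℕ) : cc n m lam i k = ccAt n m lam i k (gam n m lam i k) := rfl

theorem map_ccAt {Φ : Type*} [FunLike Φ (GF n m lam) (GF n m lam)]
    [RingHomClass Φ (GF n m lam) (GF n m lam)] (φ : Φ) {i k : ℕ}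
    (hm0 : m 0 = 0) (hmn : m n = 0) (hi : 1 ≤ i) (hi' : i ≤ n - 1)
    (hφh : φ (hb n m lam) = hb n m lam)
    (hφg : ∀ j l, 1 ≤ j → j ≤ n - 1 → 1 ≤ l → l ≤ m j → ¬(j = i ∧ l = k) →
      φ (gam n m lam j l) = gam n m lam j l)
    (x : GF n m lam) : φ (ccAt n m lam i k x) = ccAt n m lam i k (φ x) := by
  have hfix : ∀ j, j ≠ i → j ≤ n → ∀ l ∈ Icc 1 (m j), φ (gam n m lam j l) = gam n m lam j l := by
    intro j hji hjn l hl
    obtain ⟨hl1, hl2⟩ := mem_Icc.1 hl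
    have hj0 : j ≠ 0 := by rintro rfl; rw [hm0] at hl2; omega
    have hjn' : j ≠ n := by rintro rfl; rw [hmn] at hl2; omega
    exact hφg j l (by omega) (by omega) hl1 hl2 fun h => hji h.1
  have hfix_i : ∀ l ∈ (Icc 1 (m i)).erase k, φ (gam n m lam i l) = gam n m lam i l := by
    intro l hl
    obtain ⟨hlk, hl⟩ := mem_erase.1 hl
    exact hφg i l hi hi' (mem_Icc.1 hl).1 (mem_Icc.1 hl).2 fun h => hlk h.2
  simp only [ccAt, map_div₀, map_mul, map_prod, map_sub, map_add, map_pow, map_ofNat, hφh]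
  congr 2
  · exact prod_congr rfl fun l hl => by rw [hfix (i + 1) (by omega) (by omega) l hl]
  · exact prod_congr rfl fun l hl => by rw [hfix (i - 1) (by omega) (by omega) l hl]
  · exact prod_congr rfl fun l hl => by rw [hfix_i l hl]

theorem cc'_mul_ccAt_xi (i k : ℕ) :
    cc' n m lam i k * ccAt n m lam i k (xi n m lam i k) =
      RR n m lam i (xi n m lam i k) *
          ((∏ l ∈ Icc 1 (m (i - 1)),
              (xi n m lam i k ^ 2 - (gam n m lam (i - 1) l + hb n m lam / 2) ^ 2)) *
            ∏ l ∈ Icc 1 (m (i + 1)),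
              (xi n m lam i k ^ 2 - (gam n m lam (i + 1) l + hb n m lam / 2) ^ 2)) /
        (4 * (xi n m lam i k - hb n m lam / 2) * (xi n m lam i k + hb n m lam / 2) *
          ∏ l ∈ (Icc 1 (m i)).erase k,
            ((xi n m lam i k ^ 2 - gam n m lam i l ^ 2) *
              (xi n m lam i k ^ 2 - xi n m lam i l ^ 2))) := by
  rw [cc', ccAt, div_mul_div_comm, prod_sq_sub_add_half_sq (Icc 1 (m (i - 1))), prod_mul_distrib]
  have hshift : gam n m lam i k + 3 * hb n m lam / 2 = xi n m lam i k + hb n m lam / 2 := by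
    rw [xi]
    ring
  rw [hshift]
  congr 1 <;> ring

end GKLO

theorem gklo_kappaP_comp_kappa_general (n : ℕ) (m lam : ℕ → ℕ)
    (hm0 : m 0 = 0) (hmn : m n = 0)
    (σm σp : ℕ → ℕ → (GF n m lam ≃ₐ[ℂ] GF n m lam))
    (hσmh : ∀ i k, σm i k (hb n m lam) = hb n m lam)
    (hσph : ∀ i k, σp i k (hb n m lam) = hb n m lam)
    (hσmr : ∀ i k i' t, σm i k (rv n m lam i' t) = rv n m lam i' t)
    (hσpr : ∀ i k i' t, σp i k (rv n m lam i' t) = rv n m lam i' t)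
    (hσmg : ∀ i k i' k', 1 ≤ i' → i' ≤ n - 1 → 1 ≤ k' → k' ≤ m i' →
      σm i k (gam n m lam i' k') =
        if i' = i ∧ k' = k then gam n m lam i k - hb n m lam else gam n m lam i' k')
    (hσpg : ∀ i k i' k', 1 ≤ i' → i' ≤ n - 1 → 1 ≤ k' → k' ≤ m i' →
      σp i k (gam n m lam i' k') =
        if i' = i ∧ k' = k then gam n m lam i k + hb n m lam else gam n m lam i' k')
    (i k : ℕ) (hi : 1 ≤ i) (hi' : i ≤ n - 1) (hk : 1 ≤ k) (hk' : k ≤ m i) :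
    kap' n m lam σp i k * kap n m lam σm i k =
      Mop n m lam
        (RR n m lam i (xi n m lam i k) *
            ((∏ l ∈ Finset.Icc 1 (m (i - 1)),
                (xi n m lam i k ^ 2 - (gam n m lam (i - 1) l + hb n m lam / 2) ^ 2)) *
              ∏ l ∈ Finset.Icc 1 (m (i + 1)),
                (xi n m lam i k ^ 2 - (gam n m lam (i + 1) l + hb n m lam / 2) ^ 2)) /
          (4 * (xi n m lam i k - hb n m lam / 2) * (xi n m lam i k + hb n m lam / 2) *
            ∏ l ∈ (Finset.Icc 1 (m i)).erase k,
              ((xi n m lam i k ^ 2 - gam n m lam i l ^ 2) *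
                (xi n m lam i k ^ 2 - xi n m lam i l ^ 2)))) := by
  have hinv : Function.LeftInverse (σp i k) (σm i k) :=
    leftInverse_of_shift hm0 hmn (hσph i k) (hσmh i k) (hσpr i k) (hσmr i k) (hσpg i k)
      (hσmg i k) hi hi' hk hk'
  have hσp_fix : ∀ j l, 1 ≤ j → j ≤ n - 1 → 1 ≤ l → l ≤ m j → ¬(j = i ∧ l = k) →
      σp i k (gam n m lam j l) = gam n m lam j l := fun j l hj hj' hl hl' hne => by
    rw [hσpg i k j l hj hj' hl hl', if_neg hne]
  have hσp_cc : σp i k (cc n m lam i k) = ccAt n m lam i k (xi n m lam i k) := by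
    rw [cc_eq_ccAt, map_ccAt _ hm0 hmn hi hi' (hσph i k) hσp_fix, hσpg i k i k hi hi' hk hk',
      if_pos ⟨rfl, rfl⟩, xi]
  unfold kap' kap Mop
  rw [AlgEquiv.mulLeft_mul_toLinearMap_mul_of_leftInverse hinv, hσp_cc, cc'_mul_ccAt_xi]

theorem gklo_kappaP_comp_kappa (n : ℕ) (hn : 2 ≤ n) (m lam : ℕ → ℕ)
    (hm0 : m 0 = 0) (hmn : m n = 0) (hlam0 : lam 0 = 0) (hlamn : lam n = 0)
    (σm σp : ℕ → ℕ → (GF n m lam ≃ₐ[ℂ] GF n m lam))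
    (hσmh : ∀ i k, σm i k (hb n m lam) = hb n m lam)
    (hσph : ∀ i k, σp i k (hb n m lam) = hb n m lam)
    (hσmr : ∀ i k i' t, σm i k (rv n m lam i' t) = rv n m lam i' t)
    (hσpr : ∀ i k i' t, σp i k (rv n m lam i' t) = rv n m lam i' t)
    (hσmg : ∀ i k i' k', 1 ≤ i' → i' ≤ n - 1 → 1 ≤ k' → k' ≤ m i' →
      σm i k (gam n m lam i' k') =
        if i' = i ∧ k' = k then gam n m lam i k - hb n m lam else gam n m lam i' k')
    (hσpg : ∀ i k i' k', 1 ≤ i' → i' ≤ n - 1 → 1 ≤ k' → k' ≤ m i' →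
      σp i k (gam n m lam i' k') =
        if i' = i ∧ k' = k then gam n m lam i k + hb n m lam else gam n m lam i' k')
    (i k : ℕ) (hi : 1 ≤ i) (hi' : i ≤ n - 1) (hk : 1 ≤ k) (hk' : k ≤ m i) :
    kap' n m lam σp i k * kap n m lam σm i k =
      Mop n m lam
        (RR n m lam i (xi n m lam i k) *
            ((∏ l ∈ Finset.Icc 1 (m (i - 1)),
                (xi n m lam i k ^ 2 - (gam n m lam (i - 1) l + hb n m lam / 2) ^ 2)) *
              ∏ l ∈ Finset.Icc 1 (m (i + 1)),
                (xi n m lam i k ^ 2 - (gam n m lam (i + 1) l + hb n m lam / 2) ^ 2)) /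
          (4 * (xi n m lam i k - hb n m lam / 2) * (xi n m lam i k + hb n m lam / 2) *
            ∏ l ∈ (Finset.Icc 1 (m i)).erase k,
              ((xi n m lam i k ^ 2 - gam n m lam i l ^ 2) *
                (xi n m lam i k ^ 2 - xi n m lam i l ^ 2)))) :=
  gklo_kappaP_comp_kappa_general n m lam hm0 hmn σm σp hσmh hσph hσmr hσpr hσmg hσpg i k hi hi' hk
    hk'
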